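/- arXiv:2501.14353 — 2 statements merged into one kernel-verified Lean document; each statement's English description precedes it below -/
import Mathlib

section
/- Let κ > 0 and suppose ξ̄ > 0 is a critical point of f₊ (i.e. f₊'(ξ̄) = 0), where f₊ is a twice differentiable positive function on (0,∞) satisfying ξ·f₊(ξ)² − γ·f₊(ξ) − (g + κξ²) = 0 for all ξ > 0. Then f₊''(ξ̄) > 0, i.e. every critical point of f₊ is a strict local minimum. -/
theorem stmt_3 (g κ γ : ℝ) (hg : 0 < g) (hκ : 0 < κ)
    (f f' f'' : ℝ → ℝ)
    (hpos : ∀ ξ, 0 < ξ → 0 < f ξ)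
    (hquad : ∀ ξ, 0 < ξ → ξ * f ξ ^ 2 - γ * f ξ - (g + κ * ξ ^ 2) = 0)
    (hd1 : ∀ ξ, 0 < ξ → HasDerivAt f (f' ξ) ξ)
    (hd2 : ∀ ξ, 0 < ξ → HasDerivAt f' (f'' ξ) ξ)
    (ξ₀ : ℝ) (hξ₀ : 0 < ξ₀) (hcrit : f' ξ₀ = 0) :
    0 < f'' ξ₀ := by
  -- first differentiated identity
  have key1 : ∀ ξ : ℝ, 0 < ξ →
      f ξ ^ 2 + 2 * ξ * f ξ * f' ξ - γ * f' ξ - 2 * κ * ξ = 0 := by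
    intro ξ hξ
    have hF : HasDerivAt (fun x => x * f x ^ 2 - γ * f x - (g + κ * x ^ 2))
        (1 * f ξ ^ 2 + ξ * (2 * f ξ ^ 1 * f' ξ) - γ * f' ξ -
          (0 + κ * (2 * ξ ^ 1 * 1))) ξ :=
      (((hasDerivAt_id ξ).mul ((hd1 ξ hξ).pow 2)).sub
        ((hd1 ξ hξ).const_mul γ)).sub
        ((hasDerivAt_const ξ g).add (((hasDerivAt_id ξ).pow 2).const_mul κ))
    have heq : (fun x => x * f x ^ 2 - γ * f x - (g + κ * x ^ 2)) =ᶠ[nhds ξ]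
        (fun _ => (0:ℝ)) := by
      filter_upwards [Ioi_mem_nhds hξ] with x hx using hquad x hx
    have h0 : HasDerivAt (fun x => x * f x ^ 2 - γ * f x - (g + κ * x ^ 2)) 0 ξ :=
      (hasDerivAt_const ξ (0:ℝ)).congr_of_eventuallyEq heq
    have huniq := hF.unique h0
    nlinarith [huniq]
  -- second differentiated identity at ξ₀
  have h1 : HasDerivAt (fun x => 2 * f x * f' x)
      (2 * f' ξ₀ * f' ξ₀ + 2 * f ξ₀ * f'' ξ₀) ξ₀ :=
    ((hd1 ξ₀ hξ₀).const_mul 2).mul (hd2 ξ₀ hξ₀)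
  have hG : HasDerivAt (fun x => f x ^ 2 + x * (2 * f x * f' x) - γ * f' x - κ * (2 * x))
      (2 * f ξ₀ ^ 1 * f' ξ₀ +
        (1 * (2 * f ξ₀ * f' ξ₀) + ξ₀ * (2 * f' ξ₀ * f' ξ₀ + 2 * f ξ₀ * f'' ξ₀))
        - γ * f'' ξ₀ - κ * (2 * 1)) ξ₀ :=
    ((((hd1 ξ₀ hξ₀).pow 2).add ((hasDerivAt_id ξ₀).mul h1)).sub
      ((hd2 ξ₀ hξ₀).const_mul γ)).sub (((hasDerivAt_id ξ₀).const_mul 2).const_mul κ)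
  have heqG : (fun x => f x ^ 2 + x * (2 * f x * f' x) - γ * f' x - κ * (2 * x))
      =ᶠ[nhds ξ₀] (fun _ => (0:ℝ)) := by
    filter_upwards [Ioi_mem_nhds hξ₀] with x hx
    have := key1 x hx
    ring_nf at this ⊢
    linarith
  have hG0 : HasDerivAt (fun x => f x ^ 2 + x * (2 * f x * f' x) - γ * f' x - κ * (2 * x))
      0 ξ₀ := (hasDerivAt_const ξ₀ (0:ℝ)).congr_of_eventuallyEq heqG
  have huniq2 := hG.unique hG0
  rw [hcrit] at huniq2
  -- huniq2 : 2ξ₀ f f'' - γ f'' - 2κ = 0 (after simplification)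
  have hfpos := hpos ξ₀ hξ₀
  have hq := hquad ξ₀ hξ₀
  -- ξ₀ f - γ > 0
  have hγ : ξ₀ * f ξ₀ - γ > 0 := by
    nlinarith [hq, mul_pos hκ (mul_pos hξ₀ hξ₀), hfpos, hg]
  have hcoef : 2 * ξ₀ * f ξ₀ - γ > 0 := by nlinarith [mul_pos hξ₀ hfpos]
  nlinarith [huniq2, hcoef, hκ]
end

section
/- In deep water with γ > 0 and κ ≥ 0, the function f₋(ξ) = γ/(2ξ) − sqrt((g + κξ² + γ²/(4ξ))/ξ) (for ξ > 0, corresponding to the left branch f(−ξ) of the dispersion relation) satisfies lim_{ξ→0⁺} f₋(ξ) = −g/γ. -/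
/-!
Write `P ξ = (γ/2)² + ξ (g + κ ξ²)`, so that the square root in `f₋(ξ)` is `√(P ξ) / ξ`.
Rationalising, `f₋(ξ) = (γ/2 - √(P ξ)) / ξ = -(g + κ ξ²) / (γ/2 + √(P ξ))`: the singular
parts cancel, and the right-hand side is continuous at `ξ = 0` with value `-g/γ`.
-/

open Filter Topology

lemma Real.sub_sqrt_eq_div {a x : ℝ} (hx : 0 ≤ x) (h : a + √x ≠ 0) :
    a - √x = (a ^ 2 - x) / (a + √x) := by
  rw [eq_div_iff h]
  linear_combination -Real.sq_sqrt hx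

lemma leftBranch_eq_div {g γ κ ξ : ℝ} (hγ : 0 < γ) (hξ : 0 < ξ)
    (hP : 0 ≤ (γ / 2) ^ 2 + ξ * (g + κ * ξ ^ 2)) :
    γ / (2 * ξ) - √((g + κ * ξ ^ 2 + γ ^ 2 / (4 * ξ)) * (1 / ξ)) =
      (-g - κ * ξ ^ 2) / (γ / 2 + √((γ / 2) ^ 2 + ξ * (g + κ * ξ ^ 2))) := by
  set P := (γ / 2) ^ 2 + ξ * (g + κ * ξ ^ 2)
  have hden : γ / 2 + √P ≠ 0 := by positivity
  have hsqrt : √((g + κ * ξ ^ 2 + γ ^ 2 / (4 * ξ)) * (1 / ξ)) = √P / ξ := by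
    rw [show (g + κ * ξ ^ 2 + γ ^ 2 / (4 * ξ)) * (1 / ξ) = P / ξ ^ 2 by field_simp; ring,
      Real.sqrt_div' _ (sq_nonneg ξ), Real.sqrt_sq hξ.le]
  calc γ / (2 * ξ) - √((g + κ * ξ ^ 2 + γ ^ 2 / (4 * ξ)) * (1 / ξ))
      = (γ / 2 - √P) / ξ := by rw [hsqrt]; field_simp
    _ = ((γ / 2) ^ 2 - P) / (γ / 2 + √P) / ξ := by rw [Real.sub_sqrt_eq_div hP hden]
    _ = (-g - κ * ξ ^ 2) / (γ / 2 + √P) := by field_simp; ring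

theorem stmt_6_general (g γ κ : ℝ) (hγ : 0 < γ) :
    Filter.Tendsto
      (fun ξ : ℝ => γ / (2 * ξ) - Real.sqrt ((g + κ * ξ ^ 2 + γ ^ 2 / (4 * ξ)) * (1 / ξ)))
      (nhdsWithin 0 (Set.Ioi 0)) (nhds (-(g / γ))) := by
  have hP : Tendsto (fun ξ : ℝ => (γ / 2) ^ 2 + ξ * (g + κ * ξ ^ 2)) (𝓝 0) (𝓝 ((γ / 2) ^ 2)) := by
    simpa only [zero_mul, add_zero] using
      (by fun_prop : Continuous fun ξ : ℝ => (γ / 2) ^ 2 + ξ * (g + κ * ξ ^ 2)).tendsto 0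
  have hnum : Tendsto (fun ξ : ℝ => -g - κ * ξ ^ 2) (𝓝 0) (𝓝 (-g)) := by
    simpa using (by fun_prop : Continuous fun ξ : ℝ => -g - κ * ξ ^ 2).tendsto 0
  have hden : Tendsto (fun ξ : ℝ => γ / 2 + √((γ / 2) ^ 2 + ξ * (g + κ * ξ ^ 2))) (𝓝 0) (𝓝 γ) := by
    have h := (tendsto_const_nhds (x := γ / 2)).add hP.sqrt
    rwa [Real.sqrt_sq (by positivity), add_halves] at h
  have hlim : Tendsto
      (fun ξ : ℝ => (-g - κ * ξ ^ 2) / (γ / 2 + √((γ / 2) ^ 2 + ξ * (g + κ * ξ ^ 2)))) (𝓝 0) (𝓝 (-(g / γ))) := by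
    rw [← neg_div]
    exact hnum.div hden hγ.ne'
  have hPpos : ∀ᶠ ξ in 𝓝 (0 : ℝ), 0 ≤ (γ / 2) ^ 2 + ξ * (g + κ * ξ ^ 2) :=
    hP.eventually (eventually_ge_nhds (by positivity))
  refine (hlim.mono_left nhdsWithin_le_nhds).congr' ?_
  filter_upwards [self_mem_nhdsWithin, nhdsWithin_le_nhds hPpos] with ξ hξ hξP
  exact (leftBranch_eq_div hγ hξ hξP).symm

theorem stmt_6 (g γ κ : ℝ) (hg : 0 < g) (hγ : 0 < γ) (hκ : 0 ≤ κ) :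
    Filter.Tendsto
      (fun ξ : ℝ => γ / (2 * ξ) - Real.sqrt ((g + κ * ξ ^ 2 + γ ^ 2 / (4 * ξ)) * (1 / ξ)))
      (nhdsWithin 0 (Set.Ioi 0)) (nhds (-(g / γ))) :=
  stmt_6_general g γ κ hγ
end
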